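/- Let μ₁, ..., μ_η be positive integers with sum μ, where η ≥ 1. Then the sum over pairs ∑_{1≤i<j≤η} μ_i·μ_j is at least (η-1)(μ-η+1) + C(η-1, 2). -/

import Mathlib

/-!
Write `μᵢ = νᵢ + 1` with `νᵢ ≥ 0`. Expanding, `∑_{i<j} μᵢμⱼ = ∑_{i<j} νᵢνⱼ + (η - 1)(μ - η) + C(η, 2)`,
and `(η - 1)(μ - η + 1) + C(η - 1, 2)` is exactly the last two terms, so the difference is
`∑_{i<j} νᵢνⱼ ≥ 0`.
-/

open Finset

section
variable {ι : Type*} [Fintype ι] [LinearOrder ι]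

theorem sum_filter_lt_add_eq_card_sub_one_nsmul {M : Type*} [AddCommMonoid M] (h : ι → M) :
    ∑ p ∈ univ.filter (fun p : ι × ι => p.1 < p.2), (h p.1 + h p.2) =
      (Fintype.card ι - 1) • ∑ i, h i := by
  have hswap : ∑ p ∈ univ.filter (fun p : ι × ι => p.1 < p.2), h p.2 =
      ∑ p ∈ univ.filter (fun p : ι × ι => p.2 < p.1), h p.1 :=
    sum_equiv (Equiv.prodComm ι ι) (by simp) (by simp)
  have hunion : univ.filter (fun p : ι × ι => p.1 < p.2) ∪ univ.filter (fun p => p.2 < p.1) =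
      univ.filter (fun p => p.1 ≠ p.2) := by
    ext p; simp
  rw [sum_add_distrib, hswap, ← sum_union (disjoint_filter.2 fun p _ h₁ h₂ => h₁.asymm h₂),
    hunion, sum_filter, Fintype.sum_prod_type, smul_sum]
  refine sum_congr rfl fun i _ => ?_
  rw [← sum_filter]
  dsimp only
  rw [sum_const, filter_ne, card_erase_of_mem (mem_univ i), card_univ]

theorem sum_filter_lt_add_one_mul_add_one {R : Type*} [CommSemiring R] (g : ι → R) :
    ∑ p ∈ univ.filter (fun p : ι × ι => p.1 < p.2), (g p.1 + 1) * (g p.2 + 1) =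
      ∑ p ∈ univ.filter (fun p : ι × ι => p.1 < p.2), g p.1 * g p.2 +
        (Fintype.card ι - 1) • ∑ i, g i + ((Fintype.card ι).choose 2 : R) := by
  rw [← sum_filter_lt_add_eq_card_sub_one_nsmul, ← Fintype.card_product_filter_lt, ← nsmul_one,
    ← sum_const, ← sum_add_distrib, ← sum_add_distrib]
  exact sum_congr rfl fun p _ => by ring
end

theorem stmt_5 (η μ : ℕ) (hη : 1 ≤ η) (f : Fin η → ℕ)
    (hf : ∀ i, 1 ≤ f i) (hsum : ∑ i, f i = μ) :
    ((η : ℤ) - 1) * ((μ : ℤ) - η + 1) + (Nat.choose (η - 1) 2 : ℤ) ≤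
      (↑(∑ p ∈ Finset.univ.filter (fun p : Fin η × Fin η => p.1 < p.2),
          f p.1 * f p.2) : ℤ) := by
  obtain ⟨m, rfl⟩ : ∃ m, η = m + 1 := ⟨η - 1, by omega⟩
  obtain ⟨g, rfl⟩ : ∃ g : Fin (m + 1) → ℕ, f = fun i => g i + 1 :=
    ⟨fun i => f i - 1, funext fun i => (Nat.sub_add_cancel (hf i)).symm⟩
  have hμ : μ = ∑ i, g i + (m + 1) := by simp [← hsum, sum_add_distrib]
  subst hμ
  rw [sum_filter_lt_add_one_mul_add_one, Fintype.card_fin, Nat.choose_succ_succ']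
  push_cast [smul_eq_mul, Nat.choose_one_right]
  have hpairs : (0 : ℤ) ≤ ∑ p ∈ univ.filter (fun p : Fin (m + 1) × Fin (m + 1) => p.1 < p.2),
      (g p.1 : ℤ) * g p.2 := by positivity
  linarith
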